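/- Let R be a commutative semilocal integral domain (a domain with only finitely many maximal ideals) and let Λ be a module-finite R-algebra. Let M and N be finitely generated Λ-modules which are torsion-free as R-modules. Then M is isomorphic to N as Λ-modules if and only if M_𝔪 is isomorphic to N_𝔪 (as Λ_𝔪-modules) for every maximal ideal 𝔪 of R. -/

import Mathlib

/-!
Clearing denominators in an isomorphism `M_𝔪 ≅ N_𝔪` gives a `Λ`-linear map `g_𝔪 : M → N` that
becomes an isomorphism after localizing at `𝔪`; this needs `N` to embed in `N_𝔪`, which is where
torsion-freeness enters. As there are only finitely many maximal ideals, the Chinese remainder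
theorem yields one `f : M → N` with `f ≡ g_𝔪` modulo `𝔪 • Hom(M, N)` for every `𝔪`. Each `f_𝔪`
then agrees with an isomorphism modulo the maximal ideal of `R_𝔪`, so it is surjective by
Nakayama and hence bijective, being a surjection onto a finite module isomorphic to its source.
Bijectivity at every maximal ideal makes `f` an isomorphism.
-/

open scoped TensorProduct
open Submodule IsLocalRing

universe u

theorem IsLocalRing.bijective_of_range_sub_le_maximalIdeal_smul {A M N : Type*} [CommRing A]
    [IsLocalRing A] [AddCommGroup M] [Module A M] [AddCommGroup N] [Module A N]
    [Module.Finite A N] {f g : M →ₗ[A] N} (hg : Function.Bijective g)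
    (hfg : LinearMap.range (f - g) ≤ maximalIdeal A • ⊤) : Function.Bijective f := by
  have hf : Function.Surjective f := by
    refine LinearMap.range_eq_top.mp <| top_le_iff.mp <|
      le_of_le_smul_of_le_jacobson_bot Module.Finite.fg_top (maximalIdeal_le_jacobson ⊥) ?_
    intro y _
    obtain ⟨x, rfl⟩ := hg.2 y
    rw [show g x = f x - (f - g) x by simp]
    exact sub_mem (mem_sup_left ⟨x, rfl⟩) (mem_sup_right (hfg ⟨x, rfl⟩))
  exact ⟨OrzechProperty.injective_of_surjective_of_injective g f hg.1 hf, hf⟩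

theorem LocalizedModule.range_map_le_smul_top {R M N : Type*} [CommRing R] [AddCommGroup M]
    [Module R M] [AddCommGroup N] [Module R N] (S : Submonoid R) {I : Ideal R} {T : M →ₗ[R] N}
    (hT : LinearMap.range T ≤ I • ⊤) :
    LinearMap.range (LocalizedModule.map S T) ≤ I.map (algebraMap R (Localization S)) • ⊤ := by
  rw [← Ideal.localized'_eq_map (Localization S) S, ← localized'_top (Localization S) S
    (LocalizedModule.mkLinearMap S N), ← localized'_smul]
  rintro _ ⟨x, rfl⟩
  induction x using LocalizedModule.induction_on with
  | _ m s =>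
    exact ⟨T m, hT ⟨m, rfl⟩, s, by rw [LocalizedModule.map_mk, IsLocalizedModule.mk_eq_mk']⟩

theorem LocalizedModule.map_bijective_of_range_sub_le_smul {R M N : Type*} [CommRing R]
    [AddCommGroup M] [Module R M] [AddCommGroup N] [Module R N] [Module.Finite R N]
    (P : Ideal R) [P.IsMaximal] {f g : M →ₗ[R] N}
    (hg : Function.Bijective (LocalizedModule.map P.primeCompl g))
    (hfg : LinearMap.range (f - g) ≤ P • ⊤) :
    Function.Bijective (LocalizedModule.map P.primeCompl f) := by
  refine IsLocalRing.bijective_of_range_sub_le_maximalIdeal_smul hg ?_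
  rw [← map_sub, ← Localization.AtPrime.map_eq_maximalIdeal]
  exact range_map_le_smul_top _ hfg

theorem IsLocalizedModule.localizedModuleMap_bijective_of_comp_eq_smul {R M N M' N' : Type*}
    [CommRing R] [AddCommGroup M] [Module R M] [AddCommGroup N] [Module R N]
    [AddCommGroup M'] [Module R M'] [AddCommGroup N'] [Module R N'] {S : Submonoid R}
    (fM : M →ₗ[R] M') (fN : N →ₗ[R] N') [IsLocalizedModule S fM] [IsLocalizedModule S fN]
    (φ : M' ≃ₗ[R] N') (s : S) {g : M →ₗ[R] N} (hg : ∀ x, fN (g x) = (s : R) • φ (fM x)) :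
    Function.Bijective (LocalizedModule.map S g) := by
  have hmap : map S fM fN g = (algebraMap R (Module.End R N') s) ∘ₗ φ.toLinearMap := by
    refine linearMap_ext S fM fN ?_
    ext x
    simp [map_comp, hg]
  rw [← map_bijective_iff_localizedModuleMap_bijective fM fN, hmap, LinearMap.coe_comp]
  exact ((Module.End.isUnit_iff _).mp (map_units fN s)).comp φ.bijective

theorem Submodule.exists_forall_sub_mem_smul_top {R V ι : Type*} [CommRing R] [AddCommGroup V]
    [Module R V] [Finite ι] {I : ι → Ideal R} (hI : Pairwise fun i j ↦ IsCoprime (I i) (I j))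
    (v : ι → V) :
    ∃ w : V, ∀ i, w - v i ∈ I i • (⊤ : Submodule R V) := by
  classical
  have := Fintype.ofFinite ι
  choose c hc using fun j ↦
    Ideal.exists_forall_sub_mem_ideal hI fun i ↦ if i = j then (1 : R) else 0
  refine ⟨∑ j, c j • v j, fun i ↦ ?_⟩
  have : v i = ∑ j, (if i = j then (1 : R) else 0) • v j := by
    simp [ite_smul]
  rw [this, ← Finset.sum_sub_distrib]
  exact sum_mem fun j _ ↦ by
    rw [← sub_smul]; exact smul_mem_smul (hc j i) mem_top

section TensorLocalization

variable (R Λ M A : Type*) [CommRing R] [Ring Λ] [Algebra R Λ] [AddCommGroup M] [Module R M]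
  [Module Λ M] [IsScalarTower R Λ M] [CommRing A] [Algebra R A]

noncomputable def TensorProduct.tmulOne : M →ₗ[Λ] M ⊗[R] A where
  toFun x := x ⊗ₜ 1
  map_add' x y := TensorProduct.add_tmul x y 1
  map_smul' c x := TensorProduct.smul_tmul' c x 1

variable {R A} (S : Submonoid R) [IsLocalization S A]

instance TensorProduct.isLocalizedModule_tmulOne :
    IsLocalizedModule S ((TensorProduct.tmulOne R Λ M A).restrictScalars R) := by
  have : IsLocalizedModule S (TensorProduct.mk R A M 1) :=
    (isLocalizedModule_iff_isBaseChange S A _).mpr (TensorProduct.isBaseChange R M A)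
  have : (TensorProduct.tmulOne R Λ M A).restrictScalars R =
      (TensorProduct.comm R A M).toLinearMap ∘ₗ TensorProduct.mk R A M 1 := by
    ext; rfl
  rw [this]
  infer_instance

theorem TensorProduct.tmulOne_injective [Module.IsTorsionFree R M] (hS : S ≤ nonZeroDivisors R) :
    Function.Injective (TensorProduct.tmulOne R Λ M A) :=
  (IsLocalizedModule.injective_iff_isRegular S ((tmulOne R Λ M A).restrictScalars R)).mpr fun c ↦
    (isRegular_iff_mem_nonZeroDivisors.mpr (hS c.2)).smul_right_injective M

end TensorLocalization

theorem Module.Finite.exists_lift_of_isLocalizedModule_of_injective {R Λ M N N' : Type*}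
    [CommRing R] [Ring Λ] [Algebra R Λ]
    [AddCommGroup M] [Module R M] [Module Λ M] [IsScalarTower R Λ M]
    [AddCommGroup N] [Module R N] [Module Λ N] [IsScalarTower R Λ N]
    [AddCommGroup N'] [Module R N'] [Module Λ N'] [IsScalarTower R Λ N'] [Module.Finite Λ M]
    (S : Submonoid R) (f : N →ₗ[Λ] N') [IsLocalizedModule S (f.restrictScalars R)]
    (hf : Function.Injective f) (ψ : M →ₗ[Λ] N') :
    ∃ (g : M →ₗ[Λ] N) (s : S), ∀ x, f (g x) = (s : R) • ψ x := by
  obtain ⟨t, ht⟩ := Module.Finite.fg_top (R := Λ) (M := M)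
  obtain ⟨s, hs⟩ := IsLocalizedModule.exist_integer_multiples S (f.restrictScalars R) t ψ
  have hrange : LinearMap.range ((s : R) • ψ) ≤ LinearMap.range f := by
    rw [LinearMap.range_eq_map, ← ht, map_span_le]
    exact hs
  let e := LinearEquiv.ofInjective f hf
  refine ⟨e.symm ∘ₗ ((s : R) • ψ).codRestrict _ fun x ↦ hrange ⟨x, rfl⟩, s, fun x ↦ ?_⟩
  exact congrArg Subtype.val (e.apply_symm_apply _)

theorem stmt7_general (R : Type u) [CommRing R] [IsDomain R]
    (hsemilocal : {I : Ideal R | I.IsMaximal}.Finite)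
    (Λ : Type u) [Ring Λ] [Algebra R Λ] [Module.Finite R Λ]
    (M : Type u) [AddCommGroup M] [Module R M] [Module Λ M] [IsScalarTower R Λ M]
    [Module.Finite Λ M]
    (N : Type u) [AddCommGroup N] [Module R N] [Module Λ N] [IsScalarTower R Λ N]
    [Module.Finite Λ N] [NoZeroSMulDivisors R N] :
    Nonempty (M ≃ₗ[Λ] N) ↔
      ∀ 𝔪 : MaximalSpectrum R,
        Nonempty ((M ⊗[R] Localization.AtPrime 𝔪.asIdeal) ≃ₗ[Λ]
          (N ⊗[R] Localization.AtPrime 𝔪.asIdeal)) := by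
  refine ⟨fun ⟨e⟩ _ ↦ ⟨TensorProduct.AlgebraTensorModule.congr e (LinearEquiv.refl R _)⟩,
    fun h ↦ ?_⟩
  have : Module.Finite R N := .trans Λ N
  have : Finite {I : Ideal R // I.IsMaximal} := hsemilocal.to_subtype
  have : Finite (MaximalSpectrum R) := .of_equiv _ (MaximalSpectrum.equivSubtype R).symm
  choose g s hg using fun 𝔪 : MaximalSpectrum R ↦
    Module.Finite.exists_lift_of_isLocalizedModule_of_injective 𝔪.asIdeal.primeCompl
      (TensorProduct.tmulOne R Λ N (Localization.AtPrime 𝔪.asIdeal))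
      (TensorProduct.tmulOne_injective Λ N _ 𝔪.asIdeal.primeCompl_le_nonZeroDivisors)
      ((h 𝔪).some.toLinearMap ∘ₗ TensorProduct.tmulOne R Λ M _)
  obtain ⟨f, hf⟩ := Submodule.exists_forall_sub_mem_smul_top
    (fun 𝔪 𝔫 hne ↦ Ideal.isCoprime_of_isMaximal (MaximalSpectrum.ext_iff.not.mp hne)) g
  refine ⟨.ofBijective f (bijective_of_localized_maximal (f.restrictScalars R) fun P hP ↦ ?_)⟩
  let 𝔪 : MaximalSpectrum R := ⟨P, hP⟩
  refine LocalizedModule.map_bijective_of_range_sub_le_smul P (g := (g 𝔪).restrictScalars R)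
    (IsLocalizedModule.localizedModuleMap_bijective_of_comp_eq_smul
      ((TensorProduct.tmulOne R Λ M _).restrictScalars R)
      ((TensorProduct.tmulOne R Λ N _).restrictScalars R)
      ((h 𝔪).some.restrictScalars R) (s 𝔪) (hg 𝔪)) ?_
  rintro _ ⟨x, rfl⟩
  exact smul_top_le_comap_smul_top P (LinearMap.applyₗ' R x) (hf 𝔪)

/-- Let `R` be a commutative semilocal domain (only finitely many maximal
ideals) and `Λ` a module-finite `R`-algebra.  Let `M`, `N` be finitely generated
`Λ`-modules which are torsion-free as `R`-modules.  Then `M ≅ N` as `Λ`-modules if and only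
if `M_𝔪 ≅ N_𝔪` for every maximal ideal `𝔪` of `R`.  (A `Λ`-linear isomorphism between
the localized modules is the same thing as a `Λ_𝔪`-linear isomorphism.) -/
theorem stmt7 (R : Type u) [CommRing R] [IsDomain R]
    (hsemilocal : {I : Ideal R | I.IsMaximal}.Finite)
    (Λ : Type u) [Ring Λ] [Algebra R Λ] [Module.Finite R Λ]
    (M : Type u) [AddCommGroup M] [Module R M] [Module Λ M] [IsScalarTower R Λ M]
    [Module.Finite Λ M] [NoZeroSMulDivisors R M]
    (N : Type u) [AddCommGroup N] [Module R N] [Module Λ N] [IsScalarTower R Λ N]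
    [Module.Finite Λ N] [NoZeroSMulDivisors R N] :
    Nonempty (M ≃ₗ[Λ] N) ↔
      ∀ 𝔪 : MaximalSpectrum R,
        Nonempty ((M ⊗[R] Localization.AtPrime 𝔪.asIdeal) ≃ₗ[Λ]
          (N ⊗[R] Localization.AtPrime 𝔪.asIdeal)) :=
  stmt7_general R hsemilocal Λ M N
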